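/- arXiv:2602.12903 — 4 statements merged into one kernel-verified Lean document; each statement's English description precedes it below -/
import Mathlib

section
/- Let d ≥ 1 be an integer, let K ⊆ ℝ^d be a nonempty compact convex set, let x ∈ ℝ^d with ‖x‖ ≤ 1, let α ∈ [0,1] and λ ∈ ℝ, and let H = {y ∈ ℝ^d : ⟪x,y⟫ ≤ λ} be a half-space whose boundary hyperplane is orthogonal to x. Assume λ ≥ inf_{v∈K} ⟪x,v⟫ + α·width(K,x) (i.e., the projection of H on direction x contains an α fraction of the projection of K). Then for every real z with 0 ≤ z ≤ α·width(K,x), vol((K \ H) + z𝔹) ≤ (1 − (α/(1+2α))^d) · vol(K + z𝔹). -/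
/-!
Let `A = K + z𝔹`, let `p` minimize `⟪x, ·⟫` on `K`, and push `p` by `z` against `x` to a point
`c ∈ A` with `⟪x, c⟫ = ⟪x, p⟫ - z‖x‖`. Since `A` is convex, its image under the homothety of
centre `c` and ratio `t = α / (1 + 2α)` stays in `A`, and because `⟪x, ·⟫` varies over `A` by at
most `width K x + 2z‖x‖ ≤ (1 + 2α) width K x`, that image lies in the half-space
`⟪x, ·⟫ ≤ λ - z‖x‖`. The thickened set `(K \ H) + z𝔹` misses this half-space, so it sits in a part of
`A` of volume at most `(1 - t ^ d) vol A`.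
-/

open MeasureTheory Set
open scoped RealInnerProductSpace Pointwise

noncomputable section

/-- Minkowski sum `K + z𝔹` of a set with `z` times the closed Euclidean unit ball. -/
def mink {d : ℕ} (K : Set (EuclideanSpace ℝ (Fin d))) (z : ℝ) :
    Set (EuclideanSpace ℝ (Fin d)) :=
  K + Metric.closedBall (0 : EuclideanSpace ℝ (Fin d)) z

/-- Width of a set `K` along direction `x`. -/
def width {d : ℕ} (K : Set (EuclideanSpace ℝ (Fin d))) (x : EuclideanSpace ℝ (Fin d)) : ℝ :=
  sSup ((fun v => ⟪v, x⟫) '' K) - sInf ((fun v => ⟪v, x⟫) '' K)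

open Metric AffineMap Module

section Homothety

variable {E : Type*} [NormedAddCommGroup E] [NormedSpace ℝ E]

theorem Convex.homothety_image_subset {A : Set E} (hA : Convex ℝ A) {c : E} (hc : c ∈ A)
    {t : ℝ} (ht : t ∈ Icc 0 1) : homothety c t '' A ⊆ A := by
  rintro _ ⟨y, hy, rfl⟩
  rw [homothety_eq_lineMap]
  exact hA.lineMap_mem hc hy ht

variable [MeasurableSpace E] [BorelSpace E] [FiniteDimensional ℝ E]

theorem measure_sdiff_le_of_homothety_image_subset (μ : Measure E) [μ.IsAddHaarMeasure]
    {A S : Set E} {c : E} {t : ℝ} (ht : 0 ≤ t) (hA : μ A ≠ ⊤) (hS : MeasurableSet S)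
    (hsub : homothety c t '' A ⊆ A ∩ S) :
    μ (A \ S) ≤ ENNReal.ofReal (1 - t ^ finrank ℝ E) * μ A := by
  have hinter : ENNReal.ofReal (t ^ finrank ℝ E) * μ A ≤ μ (A ∩ S) := by
    simpa [abs_of_nonneg (pow_nonneg ht _)] using measure_mono (μ := μ) hsub
  have hinter_ne_top : μ (A ∩ S) ≠ ⊤ := ne_top_of_le_ne_top hA (measure_mono inter_subset_left)
  calc μ (A \ S) = μ A - μ (A ∩ S) :=
        ENNReal.eq_sub_of_add_eq hinter_ne_top (measure_sdiff_add_inter A hS)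
    _ ≤ μ A - ENNReal.ofReal (t ^ finrank ℝ E) * μ A := tsub_le_tsub_left hinter _
    _ = ENNReal.ofReal (1 - t ^ finrank ℝ E) * μ A := by
      rw [ENNReal.ofReal_sub _ (pow_nonneg ht _), ENNReal.ofReal_one,
        ENNReal.sub_mul fun _ _ => hA, one_mul]

end Homothety

section InnerProduct

variable {E : Type*} [NormedAddCommGroup E] [InnerProductSpace ℝ E]

theorem inner_le_of_mem_add_closedBall {K : Set E} {x y : E} {z M : ℝ}
    (hM : ∀ v ∈ K, ⟪x, v⟫ ≤ M) (hy : y ∈ K + closedBall 0 z) : ⟪x, y⟫ ≤ M + z * ‖x‖ := by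
  obtain ⟨v, hv, b, hb, rfl⟩ := hy
  rw [mem_closedBall_zero_iff] at hb
  calc ⟪x, v + b⟫ = ⟪x, v⟫ + ⟪x, b⟫ := inner_add_right x v b
    _ ≤ M + ‖x‖ * ‖b‖ := add_le_add (hM v hv) (real_inner_le_norm x b)
    _ ≤ M + z * ‖x‖ := by rw [mul_comm z]; gcongr

theorem lt_inner_of_mem_add_closedBall {K : Set E} {x y : E} {z m : ℝ}
    (hm : ∀ v ∈ K, m < ⟪x, v⟫) (hy : y ∈ K + closedBall 0 z) : m - z * ‖x‖ < ⟪x, y⟫ := by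
  obtain ⟨v, hv, b, hb, rfl⟩ := hy
  rw [mem_closedBall_zero_iff] at hb
  calc m - z * ‖x‖ ≤ m - ‖x‖ * ‖b‖ := by rw [mul_comm z]; gcongr
    _ < ⟪x, v⟫ + ⟪x, b⟫ :=
      add_lt_add_of_lt_of_le (hm v hv) (neg_le_of_abs_le (abs_real_inner_le_norm x b))
    _ = ⟪x, v + b⟫ := (inner_add_right x v b).symm

theorem add_closedBall_sdiff_halfspace_subset (K : Set E) (x : E) (lam z : ℝ) :
    (K \ {y | ⟪x, y⟫ ≤ lam}) + closedBall 0 z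
      ⊆ (K + closedBall 0 z) \ {y | ⟪x, y⟫ ≤ lam - z * ‖x‖} := fun _ hy =>
  ⟨add_subset_add_right sdiff_subset hy,
    not_le.2 (lt_inner_of_mem_add_closedBall (fun _ hv => not_le.1 hv.2) hy)⟩

theorem exists_mem_closedBall_inner_eq_neg (x : E) {z : ℝ} (hz : 0 ≤ z) :
    ∃ b ∈ closedBall (0 : E) z, ⟪x, b⟫ = -(z * ‖x‖) := by
  rcases eq_or_ne x 0 with rfl | hx
  · exact ⟨0, mem_closedBall_self hz, by simp⟩
  have hx' : ‖x‖ ≠ 0 := norm_ne_zero_iff.2 hx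
  refine ⟨-(z / ‖x‖) • x, ?_, ?_⟩
  · rw [mem_closedBall_zero_iff, norm_smul, norm_neg, Real.norm_of_nonneg (by positivity),
      div_mul_cancel₀ _ hx']
  · rw [inner_smul_right, real_inner_self_eq_norm_sq]
    field_simp

theorem Convex.homothety_image_subset_inter_halfspace {A : Set E} (hA : Convex ℝ A) {c x : E}
    (hc : c ∈ A) {t M : ℝ} (ht : t ∈ Icc 0 1) (hM : ∀ y ∈ A, ⟪x, y⟫ ≤ M) :
    homothety c t '' A ⊆ A ∩ {y | ⟪x, y⟫ ≤ ⟪x, c⟫ + t * (M - ⟪x, c⟫)} := by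
  refine subset_inter (hA.homothety_image_subset hc ht) ?_
  rintro _ ⟨y, hy, rfl⟩
  rw [mem_ofPred_eq, homothety_apply, vsub_eq_sub, vadd_eq_add, inner_add_right,
    inner_smul_right, inner_sub_right]
  linarith [mul_le_mul_of_nonneg_left (sub_le_sub_right (hM y hy) ⟪x, c⟫) ht.1]

variable [FiniteDimensional ℝ E] [MeasurableSpace E] [BorelSpace E]

theorem addHaar_add_closedBall_sdiff_halfspace_le (μ : Measure E) [μ.IsAddHaarMeasure]
    {K : Set E} (hKcomp : IsCompact K) (hKconv : Convex ℝ K) {x p : E} (hp : p ∈ K)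
    {w α lam z : ℝ} (hw : ∀ v ∈ K, ⟪x, v⟫ ≤ ⟪x, p⟫ + w) (hα : 0 ≤ α)
    (hlam : ⟪x, p⟫ + α * w ≤ lam) (hz0 : 0 ≤ z) (hz : z * ‖x‖ ≤ α * w) :
    μ ((K \ {y | ⟪x, y⟫ ≤ lam}) + closedBall 0 z)
      ≤ ENNReal.ofReal (1 - (α / (1 + 2 * α)) ^ finrank ℝ E) * μ (K + closedBall 0 z) := by
  set t := α / (1 + 2 * α)
  have h2α : 0 < 1 + 2 * α := by linarith
  have ht : t ∈ Icc 0 1 := ⟨by positivity, (div_le_one h2α).2 (by linarith)⟩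
  have htα : t * (1 + 2 * α) = α := div_mul_cancel₀ _ h2α.ne'
  obtain ⟨b, hb, hxb⟩ := exists_mem_closedBall_inner_eq_neg x hz0
  have hc : p + b ∈ K + closedBall 0 z := add_mem_add hp hb
  have hslab : ⟪x, p + b⟫ + t * (⟪x, p⟫ + w + z * ‖x‖ - ⟪x, p + b⟫) ≤ lam - z * ‖x‖ := by
    rw [inner_add_right, hxb]
    have htw : t * w + 2 * (t * (α * w)) = α * w := by linear_combination w * htα
    linarith [mul_nonneg ht.1 (sub_nonneg.2 hz)]
  have hsub := (hKconv.add (convex_closedBall 0 z)).homothety_image_subset_inter_halfspace hc ht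
    fun _ => inner_le_of_mem_add_closedBall hw
  calc μ ((K \ {y | ⟪x, y⟫ ≤ lam}) + closedBall 0 z)
      ≤ μ ((K + closedBall 0 z) \ {y | ⟪x, y⟫ ≤ lam - z * ‖x‖}) :=
        measure_mono (add_closedBall_sdiff_halfspace_subset K x lam z)
    _ ≤ _ := measure_sdiff_le_of_homothety_image_subset μ ht.1
        (hKcomp.add (isCompact_closedBall 0 z)).measure_lt_top.ne
        (measurableSet_le (by fun_prop) measurable_const)
        (hsub.trans (inter_subset_inter_right _ fun _ hy => le_trans hy hslab))

end InnerProduct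

theorem volume_diff_halfspace_add_ball_le_general
    (d : ℕ)
    (K : Set (EuclideanSpace ℝ (Fin d))) (hKne : K.Nonempty) (hKcomp : IsCompact K)
    (hKconv : Convex ℝ K)
    (x : EuclideanSpace ℝ (Fin d)) (hx : ‖x‖ ≤ 1)
    (α : ℝ) (hα : α ∈ Icc (0:ℝ) 1) (lam : ℝ)
    (hlam : sInf ((fun v => ⟪v, x⟫) '' K) + α * width K x ≤ lam)
    (z : ℝ) (hz0 : 0 ≤ z) (hz : z ≤ α * width K x) :
    volume (mink (K \ {y | ⟪x, y⟫ ≤ lam}) z)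
      ≤ ENNReal.ofReal (1 - (α / (1 + 2 * α)) ^ d) * volume (mink K z) := by
  have himg : IsCompact ((fun v => ⟪v, x⟫) '' K) := hKcomp.image (by fun_prop)
  obtain ⟨p, hpK, hp : ⟪p, x⟫ = sInf _⟩ := himg.sInf_mem (hKne.image _)
  rw [← hp, real_inner_comm] at hlam
  have hw : ∀ v ∈ K, ⟪x, v⟫ ≤ ⟪x, p⟫ + width K x := fun v hv => by
    have : ⟪v, x⟫ ≤ sSup _ := le_csSup himg.bddAbove (mem_image_of_mem _ hv)
    rw [real_inner_comm v x, real_inner_comm p x, width, ← hp]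
    linarith
  have hvol := addHaar_add_closedBall_sdiff_halfspace_le volume hKcomp hKconv hpK hw hα.1 hlam
    hz0 ((mul_le_of_le_one_right hz0 hx).trans hz)
  rwa [finrank_euclideanSpace_fin] at hvol

theorem volume_diff_halfspace_add_ball_le
    (d : ℕ) (hd : 1 ≤ d)
    (K : Set (EuclideanSpace ℝ (Fin d))) (hKne : K.Nonempty) (hKcomp : IsCompact K)
    (hKconv : Convex ℝ K)
    (x : EuclideanSpace ℝ (Fin d)) (hx : ‖x‖ ≤ 1)
    (α : ℝ) (hα : α ∈ Icc (0:ℝ) 1) (lam : ℝ)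
    (hlam : sInf ((fun v => ⟪v, x⟫) '' K) + α * width K x ≤ lam)
    (z : ℝ) (hz0 : 0 ≤ z) (hz : z ≤ α * width K x) :
    volume (mink (K \ {y | ⟪x, y⟫ ≤ lam}) z)
      ≤ ENNReal.ofReal (1 - (α / (1 + 2 * α)) ^ d) * volume (mink K z) :=
  volume_diff_halfspace_add_ball_le_general d K hKne hKcomp hKconv x hx α hα lam hlam z hz0 hz

end
end

section
/- Let d ≥ 1 be an integer, let S ⊆ ℝ^d be a nonempty compact convex set contained in 𝔹, let x ∈ ℝ^d with ‖x‖ = 1, and let i ∈ ℤ be such that 2^{-(i+1)} ≤ width(S,x) ≤ 2^{-i}. Set z = 2^{-i}/(8d) and let p ∈ ℝ satisfy vol({v ∈ S + z𝔹 : ⟪v,x⟫ ≤ p}) = (1/2)·vol(S + z𝔹). Then both half-space updates shrink the Steiner potential by a constant factor: vol({v ∈ S : ⟪v,x⟫ ≤ p} + z𝔹) ≤ (3/4)·vol(S + z𝔹) and vol({v ∈ S : ⟪v,x⟫ ≥ p} + z𝔹) ≤ (3/4)·vol(S + z𝔹). -/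
/-!
Thickening `S` by `z𝔹` adds `2z` to its width, so `K = S + z𝔹` is a convex body containing
points `a`, `b` with `⟪b - a, x⟫ ≥ (4d + 2) z`, and `{v ∈ S | ⟪v, x⟫ ≤ p} + z𝔹` lies in the cap
`{v ∈ K | ⟪v, x⟫ ≤ p + z}`. It remains to see that moving a median hyperplane of `K` up by `z`
leaves at most `3/4` of `K` below it. If `p ≥ ⟪a, x⟫ + 5dz/2`, the homothety centred at `a`
shrinking the cap at level `p + z` into the cap at level `p` shows that the former has volume at
most `(1 + 2/(5d))^d ≤ e^{2/5} ≤ 3/2` times `vol K / 2`. Otherwise `p ≤ ⟪b, x⟫ - (3d/2 + 2) z`, and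
the homothety centred at `b` shows that the part of `K` above `p + z` keeps at least
`(1 + 2/(3d+2))^{-d} ≥ e^{-2/3} ≥ 1/2` of the volume of the part above `p`. The other half-space
follows by replacing `x` with `-x`, since hyperplanes are null.
-/

open MeasureTheory Set
open scoped RealInnerProductSpace Pointwise ENNReal

noncomputable section

open AffineMap Module Real

theorem one_add_pow_le_exp_mul {s : ℝ} (hs : 0 ≤ 1 + s) (n : ℕ) :
    (1 + s) ^ n ≤ exp (n * s) := by
  rw [exp_nat_mul]
  exact pow_le_pow_left₀ hs (by linarith [add_one_le_exp s]) n

theorem Real.exp_two_fifths_le : exp (2 / 5) ≤ 3 / 2 := by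
  rw [← le_log_iff_exp_le (by norm_num), log_div (by norm_num) (by norm_num)]
  linarith [log_three_gt_d9, log_two_lt_d9]

theorem Real.exp_two_thirds_le : exp (2 / 3) ≤ 2 := by
  rw [← le_log_iff_exp_le (by norm_num)]
  linarith [log_two_gt_d9]

theorem measureReal_sep_le_add_sep_lt {α : Type*} [MeasurableSpace α] (μ : Measure α)
    {f : α → ℝ} (hf : Measurable f) {s : Set α} (hs : μ s ≠ ∞) (t : ℝ) :
    μ.real {a ∈ s | f a ≤ t} + μ.real {a ∈ s | t < f a} = μ.real s := by
  have hdiff : s \ {a | f a ≤ t} = {a ∈ s | t < f a} := by ext; simp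
  rw [← hdiff]
  exact measureReal_inter_add_sdiff (measurableSet_le hf measurable_const) hs

section Homothety

variable {E : Type*} [NormedAddCommGroup E] [NormedSpace ℝ E]

theorem Convex.mapsTo_homothety {K : Set E} (hK : Convex ℝ K) {c : E} (hc : c ∈ K) {r : ℝ}
    (hr : r ∈ Icc 0 1) : MapsTo (homothety c r) K K := fun v hv => by
  rw [homothety_eq_lineMap]
  exact hK.lineMap_mem hc hv hr

variable [FiniteDimensional ℝ E] [MeasurableSpace E] [BorelSpace E] (μ : Measure E)
  [μ.IsAddHaarMeasure]

theorem measureReal_le_of_mapsTo_homothety {s t : Set E} (ht : μ t ≠ ∞) (c : E) {r : ℝ}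
    (hr : 0 < r) (h : MapsTo (homothety c r⁻¹) s t) :
    μ.real s ≤ r ^ finrank ℝ E * μ.real t := by
  have himage : r⁻¹ ^ finrank ℝ E * μ.real s ≤ μ.real t := by
    have := measureReal_mono (μ := μ) (image_subset_iff.2 h) ht
    rwa [measureReal_def, Measure.addHaar_image_homothety, ENNReal.toReal_mul,
      ENNReal.toReal_ofReal (abs_nonneg _), abs_of_pos (by positivity), ← measureReal_def] at this
  calc μ.real s = r ^ finrank ℝ E * (r⁻¹ ^ finrank ℝ E * μ.real s) := by
        rw [← mul_assoc, ← mul_pow, mul_inv_cancel₀ hr.ne', one_pow, one_mul]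
    _ ≤ r ^ finrank ℝ E * μ.real t := by gcongr

end Homothety

section Caps

variable {E : Type*} [NormedAddCommGroup E] [InnerProductSpace ℝ E]

theorem inner_homothety_left (c v x : E) (r : ℝ) :
    ⟪homothety c r v, x⟫ = ⟪c, x⟫ + r * (⟪v, x⟫ - ⟪c, x⟫) := by
  rw [homothety_apply, vsub_eq_sub, vadd_eq_add, inner_add_left, real_inner_smul_left,
    inner_sub_left, add_comm]

variable [FiniteDimensional ℝ E] [MeasurableSpace E] [BorelSpace E] (μ : Measure E)
  [μ.IsAddHaarMeasure]

theorem addHaar_hyperplane {x : E} (hx : x ≠ 0) (p : ℝ) : μ {v | ⟪v, x⟫ = p} = 0 := by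
  let H : AffineSubspace ℝ E := (affineSpan ℝ {p}).comap (innerSL ℝ x).toLinearMap.toAffineMap
  have hH : (H : Set E) = {v | ⟪v, x⟫ = p} := by
    ext v
    simp [H, AffineSubspace.coe_comap, AffineSubspace.coe_affineSpan_singleton, real_inner_comm]
  have hH_ne_top : H ≠ ⊤ := by
    intro htop
    have h0 : (0 : E) ∈ (H : Set E) := htop ▸ AffineSubspace.mem_top ℝ E 0
    have h1 : x ∈ (H : Set E) := htop ▸ AffineSubspace.mem_top ℝ E x
    rw [hH] at h0 h1
    simp only [mem_ofPred_eq, inner_zero_left] at h0 h1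
    exact hx (inner_self_eq_zero.1 (h1.trans h0.symm))
  rw [← hH]
  exact Measure.addHaar_affineSubspace μ H hH_ne_top

variable {μ} {K : Set E} {x : E} {p z : ℝ}

theorem measureReal_sep_le_inner_le_half (hKfin : μ K ≠ ∞) (hx : x ≠ 0)
    (hp : μ.real {v ∈ K | ⟪v, x⟫ ≤ p} = μ.real K / 2) :
    μ.real {v ∈ K | p ≤ ⟪v, x⟫} ≤ μ.real K / 2 := by
  have hsub : {v ∈ K | p ≤ ⟪v, x⟫} ⊆ {v ∈ K | p < ⟪v, x⟫} ∪ {v | ⟪v, x⟫ = p} := by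
    rintro v ⟨hvK, hvx⟩
    rcases hvx.lt_or_eq with hlt | heq
    · exact Or.inl ⟨hvK, hlt⟩
    · exact Or.inr heq.symm
  have hle : μ {v ∈ K | p ≤ ⟪v, x⟫} ≤ μ {v ∈ K | p < ⟪v, x⟫} :=
    calc μ {v ∈ K | p ≤ ⟪v, x⟫}
        ≤ μ {v ∈ K | p < ⟪v, x⟫} + μ {v | ⟪v, x⟫ = p} :=
          (measure_mono hsub).trans (measure_union_le _ _)
      _ = μ {v ∈ K | p < ⟪v, x⟫} := by rw [addHaar_hyperplane μ hx, add_zero]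
  have hle_real := ENNReal.toReal_mono (measure_ne_top_of_subset (sep_subset _ _) hKfin) hle
  rw [← measureReal_def, ← measureReal_def] at hle_real
  linarith [measureReal_sep_le_add_sep_lt μ (f := fun v => ⟪v, x⟫) (by fun_prop) hKfin p]

theorem Convex.measureReal_inner_le_add_le_of_far_above (hK : Convex ℝ K) (hKfin : μ K ≠ ∞)
    {a : E} (ha : a ∈ K) (hz : 0 ≤ z) (hpa : 5 * finrank ℝ E * z / 2 < p - ⟪a, x⟫)
    (hhalf : μ.real {v ∈ K | ⟪v, x⟫ ≤ p} ≤ μ.real K / 2) :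
    μ.real {v ∈ K | ⟪v, x⟫ ≤ p + z} ≤ 3 / 4 * μ.real K := by
  set n := finrank ℝ E
  set δ := p - ⟪a, x⟫ with hδ_def
  have hδ : 0 < δ := lt_of_le_of_lt (by positivity) hpa
  have hr : 0 < 1 + z / δ := by positivity
  have hmaps : MapsTo (homothety a (1 + z / δ)⁻¹) {v ∈ K | ⟪v, x⟫ ≤ p + z}
      {v ∈ K | ⟪v, x⟫ ≤ p} := by
    rintro v ⟨hvK, hvx⟩
    refine ⟨hK.mapsTo_homothety ha ⟨by positivity, inv_le_one_of_one_le₀ (by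
      linarith [div_nonneg hz hδ.le])⟩ hvK, ?_⟩
    have hshift : (1 + z / δ)⁻¹ * (⟪v, x⟫ - ⟪a, x⟫) ≤ (1 + z / δ)⁻¹ * (δ + z) :=
      mul_le_mul_of_nonneg_left (by linarith) (inv_pos.2 hr).le
    rw [show (1 + z / δ)⁻¹ * (δ + z) = δ by field_simp] at hshift
    rw [inner_homothety_left]
    linarith
  have hratio : (1 + z / δ) ^ n ≤ 3 / 2 := by
    refine (one_add_pow_le_exp_mul hr.le n).trans ((exp_le_exp.2 ?_).trans exp_two_fifths_le)
    rw [mul_div_assoc', div_le_iff₀ hδ]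
    linarith
  calc μ.real {v ∈ K | ⟪v, x⟫ ≤ p + z}
      ≤ (1 + z / δ) ^ n * μ.real {v ∈ K | ⟪v, x⟫ ≤ p} :=
        measureReal_le_of_mapsTo_homothety μ (measure_ne_top_of_subset (sep_subset _ _) hKfin)
          a hr hmaps
    _ ≤ 3 / 2 * (μ.real K / 2) := by gcongr
    _ = 3 / 4 * μ.real K := by ring

theorem Convex.measureReal_inner_le_add_le_of_far_below (hK : Convex ℝ K) (hKfin : μ K ≠ ∞)
    {b : E} (hb : b ∈ K) (hz : 0 < z) (hpb : (3 * finrank ℝ E + 4) * z / 2 ≤ ⟪b, x⟫ - p)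
    (hhalf : μ.real {v ∈ K | ⟪v, x⟫ ≤ p} ≤ μ.real K / 2) :
    μ.real {v ∈ K | ⟪v, x⟫ ≤ p + z} ≤ 3 / 4 * μ.real K := by
  set n := finrank ℝ E
  set δ := ⟪b, x⟫ - p - z with hδ_def
  have hδ : 0 < δ := by nlinarith [(n.cast_nonneg : (0 : ℝ) ≤ n)]
  have hr : 0 < 1 + z / δ := by positivity
  have hmaps : MapsTo (homothety b (1 + z / δ)⁻¹) {v ∈ K | p < ⟪v, x⟫}
      {v ∈ K | p + z < ⟪v, x⟫} := by
    rintro v ⟨hvK, hvx⟩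
    refine ⟨hK.mapsTo_homothety hb ⟨by positivity, inv_le_one_of_one_le₀ (by
      linarith [div_nonneg hz.le hδ.le])⟩ hvK, ?_⟩
    have hshift : (1 + z / δ)⁻¹ * (⟪b, x⟫ - ⟪v, x⟫) < (1 + z / δ)⁻¹ * (δ + z) :=
      mul_lt_mul_of_pos_left (by linarith) (inv_pos.2 hr)
    rw [show (1 + z / δ)⁻¹ * (δ + z) = δ by field_simp] at hshift
    rw [inner_homothety_left]
    linarith
  have hratio : (1 + z / δ) ^ n ≤ 2 := by
    refine (one_add_pow_le_exp_mul hr.le n).trans ((exp_le_exp.2 ?_).trans exp_two_thirds_le)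
    rw [mul_div_assoc', div_le_iff₀ hδ]
    linarith
  have hupper : μ.real {v ∈ K | p < ⟪v, x⟫} ≤ 2 * μ.real {v ∈ K | p + z < ⟪v, x⟫} :=
    calc μ.real {v ∈ K | p < ⟪v, x⟫}
        ≤ (1 + z / δ) ^ n * μ.real {v ∈ K | p + z < ⟪v, x⟫} :=
          measureReal_le_of_mapsTo_homothety μ (measure_ne_top_of_subset (sep_subset _ _) hKfin)
            b hr hmaps
      _ ≤ 2 * μ.real {v ∈ K | p + z < ⟪v, x⟫} := by gcongr
  have hmeas : Measurable fun v : E => ⟪v, x⟫ := by fun_prop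
  linarith [measureReal_sep_le_add_sep_lt μ hmeas hKfin p,
    measureReal_sep_le_add_sep_lt μ hmeas hKfin (p + z)]

-- `5n/2` balances the two cases: the factors are `e^{2/5} ≤ 3/2` and `e^{2/3} ≤ 2`.
theorem Convex.measureReal_inner_le_add_le (hK : Convex ℝ K) (hKfin : μ K ≠ ∞) {a b : E}
    (ha : a ∈ K) (hb : b ∈ K) (hz : 0 < z) (hab : (4 * finrank ℝ E + 2) * z ≤ ⟪b, x⟫ - ⟪a, x⟫)
    (hhalf : μ.real {v ∈ K | ⟪v, x⟫ ≤ p} ≤ μ.real K / 2) :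
    μ.real {v ∈ K | ⟪v, x⟫ ≤ p + z} ≤ 3 / 4 * μ.real K := by
  rcases lt_or_ge (5 * finrank ℝ E * z / 2) (p - ⟪a, x⟫) with hpa | hpa
  · exact hK.measureReal_inner_le_add_le_of_far_above hKfin ha hz.le hpa hhalf
  · exact hK.measureReal_inner_le_add_le_of_far_below hKfin hb hz (by linarith) hhalf

theorem Convex.measureReal_sub_le_inner_le (hK : Convex ℝ K) (hKfin : μ K ≠ ∞) (hx : x ≠ 0)
    {a b : E} (ha : a ∈ K) (hb : b ∈ K) (hz : 0 < z)
    (hab : (4 * finrank ℝ E + 2) * z ≤ ⟪b, x⟫ - ⟪a, x⟫)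
    (hp : μ.real {v ∈ K | ⟪v, x⟫ ≤ p} = μ.real K / 2) :
    μ.real {v ∈ K | p - z ≤ ⟪v, x⟫} ≤ 3 / 4 * μ.real K := by
  have hhalf : μ.real {v ∈ K | ⟪v, -x⟫ ≤ -p} ≤ μ.real K / 2 := by
    simpa only [inner_neg_right, neg_le_neg_iff] using
      measureReal_sep_le_inner_le_half hKfin hx hp
  have hab' : (4 * finrank ℝ E + 2) * z ≤ ⟪a, -x⟫ - ⟪b, -x⟫ := by
    simp only [inner_neg_right]
    linarith
  have := hK.measureReal_inner_le_add_le hKfin hb ha hz hab' hhalf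
  simpa only [inner_neg_right, neg_add_eq_sub, neg_le, neg_sub] using this

end Caps

section Thickening

variable {d : ℕ}

theorem IsCompact.exists_width_eq {S : Set (EuclideanSpace ℝ (Fin d))} (hS : IsCompact S)
    (hne : S.Nonempty) (x : EuclideanSpace ℝ (Fin d)) : ∃ a ∈ S, ∃ b ∈ S, width S x = ⟪b, x⟫ - ⟪a, x⟫ := by
  have himage : IsCompact ((fun v => ⟪v, x⟫) '' S) := hS.image (by fun_prop)
  obtain ⟨a, ha, hinf⟩ := himage.sInf_mem (hne.image _)
  obtain ⟨b, hb, hsup⟩ := himage.sSup_mem (hne.image _)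
  exact ⟨a, ha, b, hb, by rw [width, ← hinf, ← hsup]⟩

theorem IsCompact.exists_mem_mink_inner_sub_eq {S : Set (EuclideanSpace ℝ (Fin d))}
    (hS : IsCompact S) (hne : S.Nonempty) {x : EuclideanSpace ℝ (Fin d)} (hx : ‖x‖ = 1) {z : ℝ} (hz : 0 ≤ z) :
    ∃ a ∈ mink S z, ∃ b ∈ mink S z, ⟪b, x⟫ - ⟪a, x⟫ = width S x + 2 * z := by
  obtain ⟨a, ha, b, hb, hwidth⟩ := hS.exists_width_eq hne x
  have hzx : ‖z • x‖ ≤ z := by rw [norm_smul, hx, Real.norm_of_nonneg hz, mul_one]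
  refine ⟨a + -(z • x), add_mem_add ha (by simpa using hzx),
    b + z • x, add_mem_add hb (by simpa using hzx), ?_⟩
  rw [inner_add_left, inner_add_left, inner_neg_left, real_inner_smul_left,
    real_inner_self_eq_norm_sq, hx, hwidth]
  ring

theorem mink_sep_inner_le_subset (S : Set (EuclideanSpace ℝ (Fin d)))
    (x : EuclideanSpace ℝ (Fin d)) (p z : ℝ) :
    mink {v ∈ S | ⟪v, x⟫ ≤ p} z ⊆ {v ∈ mink S z | ⟪v, x⟫ ≤ p + z * ‖x‖} := by
  rintro _ ⟨s, ⟨hsS, hsx⟩, w, hw, rfl⟩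
  rw [mem_closedBall_zero_iff] at hw
  refine ⟨add_mem_add hsS (mem_closedBall_zero_iff.2 hw), ?_⟩
  have hwx := (real_inner_le_norm w x).trans (mul_le_mul_of_nonneg_right hw (norm_nonneg x))
  rw [inner_add_left]
  linarith

theorem mink_sep_le_inner_subset (S : Set (EuclideanSpace ℝ (Fin d)))
    (x : EuclideanSpace ℝ (Fin d)) (p z : ℝ) :
    mink {v ∈ S | p ≤ ⟪v, x⟫} z ⊆ {v ∈ mink S z | p - z * ‖x‖ ≤ ⟪v, x⟫} := by
  rintro _ ⟨s, ⟨hsS, hsx⟩, w, hw, rfl⟩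
  rw [mem_closedBall_zero_iff] at hw
  refine ⟨add_mem_add hsS (mem_closedBall_zero_iff.2 hw), ?_⟩
  have hwx := (neg_le_of_abs_le (abs_real_inner_le_norm w x)).trans'
    (neg_le_neg (mul_le_mul_of_nonneg_right hw (norm_nonneg x)))
  rw [inner_add_left]
  linarith

end Thickening

theorem measure_le_mul_of_measureReal_le {α : Type*} [MeasurableSpace α] {μ : Measure α}
    {s u t : Set α} (hsu : s ⊆ u) (hut : u ⊆ t) (ht : μ t ≠ ∞) {c : ℝ≥0∞} (hc : c ≠ ∞)
    (h : μ.real u ≤ c.toReal * μ.real t) : μ s ≤ c * μ t := by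
  refine (measure_mono hsu).trans ?_
  rwa [← ENNReal.toReal_le_toReal (measure_ne_top_of_subset hut ht) (ENNReal.mul_ne_top hc ht),
    ENNReal.toReal_mul]

theorem balanced_price_potential_decrease_general
    (d : ℕ) (hd : 1 ≤ d)
    (S : Set (EuclideanSpace ℝ (Fin d))) (hSne : S.Nonempty) (hScomp : IsCompact S)
    (hSconv : Convex ℝ S)
    (x : EuclideanSpace ℝ (Fin d)) (hx : ‖x‖ = 1)
    (i : ℤ) (hwl : (2:ℝ) ^ (-(i + 1)) ≤ width S x)
    (z : ℝ) (hzdef : z = (2:ℝ) ^ (-i) / (8 * d))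
    (p : ℝ)
    (hp : volume {v ∈ mink S z | ⟪v, x⟫ ≤ p} = (1/2 : ℝ≥0∞) * volume (mink S z)) :
    volume (mink {v ∈ S | ⟪v, x⟫ ≤ p} z) ≤ (3/4 : ℝ≥0∞) * volume (mink S z) ∧
    volume (mink {v ∈ S | p ≤ ⟪v, x⟫} z) ≤ (3/4 : ℝ≥0∞) * volume (mink S z) := by
  have hz : 0 < z := by
    have : (1 : ℝ) ≤ d := by exact_mod_cast hd
    rw [hzdef]; positivity
  have h4dz : 4 * (d : ℝ) * z = 2 ^ (-(i + 1)) := by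
    rw [hzdef, neg_add, zpow_add₀ two_ne_zero]
    field_simp
    norm_num
  have hK : Convex ℝ (mink S z) := hSconv.add (convex_closedBall _ _)
  have hKfin : volume (mink S z) ≠ ∞ := (hScomp.add (isCompact_closedBall _ _)).measure_lt_top.ne
  obtain ⟨a, ha, b, hb, hab⟩ := hScomp.exists_mem_mink_inner_sub_eq hSne hx hz.le
  have hwide : (4 * finrank ℝ (EuclideanSpace ℝ (Fin d)) + 2) * z ≤ ⟪b, x⟫ - ⟪a, x⟫ := by
    rw [hab, finrank_euclideanSpace_fin]
    linarith
  have hhalf : volume.real {v ∈ mink S z | ⟪v, x⟫ ≤ p} = volume.real (mink S z) / 2 := by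
    rw [measureReal_def, hp, ENNReal.toReal_mul, ← measureReal_def]
    norm_num
    ring
  constructor
  · refine measure_le_mul_of_measureReal_le (mink_sep_inner_le_subset S x p z) (sep_subset _ _)
      hKfin (by finiteness) ?_
    simpa [hx] using hK.measureReal_inner_le_add_le hKfin ha hb hz hwide hhalf.le
  · refine measure_le_mul_of_measureReal_le (mink_sep_le_inner_subset S x p z) (sep_subset _ _)
      hKfin (by finiteness) ?_
    have hx0 : x ≠ 0 := norm_ne_zero_iff.1 (by rw [hx]; exact one_ne_zero)
    simpa [hx] using hK.measureReal_sub_le_inner_le hKfin hx0 ha hb hz hwide hhalf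

/-- Balanced prices shrink the Steiner potential by a factor `3/4`, regardless of the
feedback. -/
theorem balanced_price_potential_decrease
    (d : ℕ) (hd : 1 ≤ d)
    (S : Set (EuclideanSpace ℝ (Fin d))) (hSne : S.Nonempty) (hScomp : IsCompact S)
    (hSconv : Convex ℝ S)
    (hSball : S ⊆ Metric.closedBall (0 : EuclideanSpace ℝ (Fin d)) 1)
    (x : EuclideanSpace ℝ (Fin d)) (hx : ‖x‖ = 1)
    (i : ℤ) (hwl : (2:ℝ) ^ (-(i + 1)) ≤ width S x) (hwu : width S x ≤ (2:ℝ) ^ (-i))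
    (z : ℝ) (hzdef : z = (2:ℝ) ^ (-i) / (8 * d))
    (p : ℝ)
    (hp : volume {v ∈ mink S z | ⟪v, x⟫ ≤ p} = (1/2 : ℝ≥0∞) * volume (mink S z)) :
    volume (mink {v ∈ S | ⟪v, x⟫ ≤ p} z) ≤ (3/4 : ℝ≥0∞) * volume (mink S z) ∧
    volume (mink {v ∈ S | p ≤ ⟪v, x⟫} z) ≤ (3/4 : ℝ≥0∞) * volume (mink S z) :=
  balanced_price_potential_decrease_general d hd S hSne hScomp hSconv x hx i hwl z hzdef p hp

end
end

section
/- Let d ≥ 1 be an integer, let S, B ⊆ ℝ^d be nonempty compact convex sets, and let x ∈ ℝ^d with ‖x‖ ≤ 1. Write s̲ = inf_{v∈S} ⟪v,x⟫, s̄ = sup_{v∈S} ⟪v,x⟫, b̲ = inf_{v∈B} ⟪v,x⟫, b̄ = sup_{v∈B} ⟪v,x⟫. Assume the 'strong overlap' conditions: b̲ < s̄; it is NOT the case that (width(S,x) ≥ width(B,x) and (s̲+s̄)/2 ≤ b̲); and it is NOT the case that (width(B,x) ≥ width(S,x) and (b̲+b̄)/2 ≥ s̄). Let p ∈ ℝ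 with s̲ ≤ p ≤ b̄ (a price that results in a trade). Then at least one of the following holds: (i) for every z with 0 ≤ z ≤ width(S,x)/4, vol({v ∈ S : ⟪v,x⟫ ≤ p} + z𝔹) ≤ (1 − 6^{-d})·vol(S + z𝔹); or (ii) for every z with 0 ≤ z ≤ width(B,x)/4, vol({v ∈ B : ⟪v,x⟫ ≥ p} + z𝔹) ≤ (1 − 6^{-d})·vol(B + z𝔹). -/
open MeasureTheory Set
open scoped RealInnerProductSpace Pointwise ENNReal

noncomputable section

/-!
Put `T = K + z𝔹` and `v₁ = v₀ + (z/‖x‖) x ∈ T`, where `v₀ ∈ K` maximises `⟪·, x⟫ =: hi` on `K`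
and `lo` is its minimum. By convexity the homothetic copy `v₁ + (T - v₁)/6` lies in `T`, and it
has volume `6^{-d} vol T`. On it `⟪·, x⟫ ≥ (5/6)(hi + z‖x‖) + (1/6)(lo - z‖x‖)`, which is at least
`p + z‖x‖` once `p ≤ lo + (3/4)(hi - lo)` and `z ≤ (hi - lo)/4`; on `{v ∈ K | ⟪v, x⟫ ≤ p} + z𝔹`
it is at most `p + z‖x‖`. The two sets meet only in a hyperplane, so the cut set misses a `6^{-d}`
fraction of `T`. Under the strong overlap conditions every price lies in the lower three quarters
of the range of `⟪·, x⟫` on `S` or in the upper three quarters of its range on `B`.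
-/

section InnerBounds

variable {E : Type*} [NormedAddCommGroup E] [InnerProductSpace ℝ E]

lemma inner_le_of_mem_add_closedBall_s3 {K : Set E} {x u : E} {c z : ℝ}
    (hK : ∀ v ∈ K, ⟪v, x⟫ ≤ c) (hu : u ∈ K + Metric.closedBall 0 z) :
    ⟪u, x⟫ ≤ c + z * ‖x‖ := by
  obtain ⟨v, hv, w, hw, rfl⟩ := hu
  rw [mem_closedBall_zero_iff] at hw
  rw [inner_add_left]
  gcongr
  · exact hK v hv
  · exact (real_inner_le_norm w x).trans (by gcongr)

lemma le_inner_of_mem_add_closedBall {K : Set E} {x u : E} {c z : ℝ}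
    (hK : ∀ v ∈ K, c ≤ ⟪v, x⟫) (hu : u ∈ K + Metric.closedBall 0 z) :
    c - z * ‖x‖ ≤ ⟪u, x⟫ := by
  have := inner_le_of_mem_add_closedBall_s3 (x := -x) (c := -c) (fun v hv => ?_) hu
  · rw [inner_neg_right, norm_neg] at this
    linarith
  · rw [inner_neg_right]
    exact neg_le_neg (hK v hv)

end InnerBounds

section Volume

variable {E : Type*} [NormedAddCommGroup E] [InnerProductSpace ℝ E] [FiniteDimensional ℝ E]
  [MeasurableSpace E] [BorelSpace E] (μ : Measure E) [μ.IsAddHaarMeasure]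

lemma addHaar_setOf_inner_eq {x : E} (hx : x ≠ 0) (c : ℝ) : μ {v | ⟪v, x⟫ = c} = 0 := by
  set a : E := (c / ‖x‖ ^ 2) • x
  have ha : ⟪x, a⟫ = c := by
    rw [real_inner_smul_right, real_inner_self_eq_norm_sq]
    field_simp [norm_ne_zero_iff.2 hx]
  have hset : {v | ⟪v, x⟫ = c} = (fun v => v + -a) ⁻¹' ((ℝ ∙ x)ᗮ : Submodule ℝ E) := by
    ext v
    simp only [mem_ofPred_eq, mem_preimage, SetLike.mem_coe,
      Submodule.mem_orthogonal_singleton_iff_inner_right, inner_add_right, inner_neg_right,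
      real_inner_comm x, ha, add_neg_eq_zero]
  rw [hset, measure_preimage_add_right]
  refine Measure.addHaar_submodule μ _ fun htop => hx ?_
  have hmem : x ∈ (ℝ ∙ x)ᗮ := htop ▸ Submodule.mem_top
  exact inner_self_eq_zero.1 (Submodule.mem_orthogonal_singleton_iff_inner_right.1 hmem)

lemma addHaar_le_of_inter_image_homothety_null {T A : Set E} (hT : IsCompact T)
    (hTc : Convex ℝ T) {c : E} (hc : c ∈ T) {r : ℝ} (hr : r ∈ Icc 0 1) (hA : A ⊆ T)
    (hnull : μ (A ∩ AffineMap.homothety c r '' T) = 0) :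
    μ A ≤ ENNReal.ofReal (1 - r ^ Module.finrank ℝ E) * μ T := by
  set C := AffineMap.homothety c r '' T
  have hCT : C ⊆ T := by
    rintro _ ⟨u, hu, rfl⟩
    rw [AffineMap.homothety_eq_lineMap]
    exact hTc.lineMap_mem hc hu hr
  have hCmeas : MeasurableSet C :=
    (hT.image (AffineMap.homothety_continuous c r)).measurableSet
  have hCvol : μ C = ENNReal.ofReal (r ^ Module.finrank ℝ E) * μ T := by
    rw [Measure.addHaar_image_homothety, abs_of_nonneg (pow_nonneg hr.1 _)]
  have hT_ne_top : μ T ≠ ∞ := hT.measure_lt_top.ne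
  have hsum : μ A + μ C ≤ μ T := by
    rw [← measure_union_add_inter A hCmeas, hnull, add_zero]
    exact measure_mono (union_subset hA hCT)
  rw [ENNReal.ofReal_sub _ (pow_nonneg hr.1 _), ENNReal.ofReal_one,
    ENNReal.sub_mul fun _ _ => hT_ne_top, one_mul, ← hCvol]
  exact ENNReal.le_sub_of_add_le_right (measure_ne_top_of_subset hCT hT_ne_top) hsum

lemma addHaar_sublevel_add_closedBall_le {K : Set E} (hK : IsCompact K) (hKc : Convex ℝ K)
    {x : E} (hx0 : x ≠ 0) (hx : ‖x‖ ≤ 1) {v₀ : E} (hv₀ : v₀ ∈ K) {lo p z : ℝ}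
    (hlo : ∀ v ∈ K, lo ≤ ⟪v, x⟫) (hp : p ≤ lo + 3 / 4 * (⟪v₀, x⟫ - lo)) (hz0 : 0 ≤ z)
    (hz : z ≤ (⟪v₀, x⟫ - lo) / 4) :
    μ ({v ∈ K | ⟪v, x⟫ ≤ p} + Metric.closedBall 0 z)
      ≤ ENNReal.ofReal (1 - (6 : ℝ) ^ (-(Module.finrank ℝ E : ℤ)))
        * μ (K + Metric.closedBall 0 z) := by
  set A := {v ∈ K | ⟪v, x⟫ ≤ p} + Metric.closedBall (0 : E) z
  set T := K + Metric.closedBall (0 : E) z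
  set v₁ : E := v₀ + (z / ‖x‖) • x
  have hxpos : 0 < ‖x‖ := norm_pos_iff.2 hx0
  have hv₁ : v₁ ∈ T := by
    refine add_mem_add hv₀ ?_
    rw [mem_closedBall_zero_iff, norm_smul, Real.norm_eq_abs, abs_of_nonneg (by positivity),
      div_mul_cancel₀ _ hxpos.ne']
  have hv₁x : ⟪v₁, x⟫ = ⟪v₀, x⟫ + z * ‖x‖ := by
    rw [inner_add_left, real_inner_smul_left, real_inner_self_eq_norm_sq]
    field_simp
  have hzx : z * ‖x‖ ≤ z := mul_le_of_le_one_right hz0 hx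
  have hnull : μ (A ∩ AffineMap.homothety v₁ (1 / 6 : ℝ) '' T) = 0 := by
    refine measure_mono_null ?_ (addHaar_setOf_inner_eq μ hx0 (p + z * ‖x‖))
    rintro _ ⟨hcut, u, hu, rfl⟩
    refine le_antisymm (inner_le_of_mem_add_closedBall_s3 (fun v hv => hv.2) hcut) ?_
    have hux := le_inner_of_mem_add_closedBall hlo hu
    rw [AffineMap.homothety_apply, vsub_eq_sub, vadd_eq_add, inner_add_left,
      real_inner_smul_left, inner_sub_left, hv₁x]
    linarith
  have h := addHaar_le_of_inter_image_homothety_null μ (hK.add (isCompact_closedBall 0 z))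
    (hKc.add (convex_closedBall 0 z)) hv₁ ⟨by norm_num, by norm_num⟩
    (add_subset_add_right (sep_subset _ _)) hnull
  rwa [one_div, inv_pow, ← zpow_natCast, ← zpow_neg] at h

lemma addHaar_superlevel_add_closedBall_le {K : Set E} (hK : IsCompact K) (hKc : Convex ℝ K)
    {x : E} (hx0 : x ≠ 0) (hx : ‖x‖ ≤ 1) {v₀ : E} (hv₀ : v₀ ∈ K) {hi p z : ℝ}
    (hhi : ∀ v ∈ K, ⟪v, x⟫ ≤ hi) (hp : hi - 3 / 4 * (hi - ⟪v₀, x⟫) ≤ p) (hz0 : 0 ≤ z)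
    (hz : z ≤ (hi - ⟪v₀, x⟫) / 4) :
    μ ({v ∈ K | p ≤ ⟪v, x⟫} + Metric.closedBall 0 z)
      ≤ ENNReal.ofReal (1 - (6 : ℝ) ^ (-(Module.finrank ℝ E : ℤ)))
        * μ (K + Metric.closedBall 0 z) := by
  have hcut : {v ∈ K | p ≤ ⟪v, x⟫} = {v ∈ K | ⟪v, -x⟫ ≤ -p} := by
    simp only [inner_neg_right, neg_le_neg_iff]
  rw [hcut]
  refine addHaar_sublevel_add_closedBall_le μ hK hKc (neg_ne_zero.2 hx0) (norm_neg x ▸ hx) hv₀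
    (lo := -hi) (fun v hv => ?_) ?_ hz0 ?_ <;> rw [inner_neg_right]
  · exact neg_le_neg (hhi v hv)
  · linarith
  · linarith

end Volume

lemma le_three_quarters_or_three_quarters_le {sLo sHi bLo bHi : ℝ}
    (hS : ¬ (bHi - bLo ≤ sHi - sLo ∧ (sLo + sHi) / 2 ≤ bLo))
    (hB : ¬ (sHi - sLo ≤ bHi - bLo ∧ sHi ≤ (bLo + bHi) / 2)) (p : ℝ) :
    p ≤ sLo + 3 / 4 * (sHi - sLo) ∨ bHi - 3 / 4 * (bHi - bLo) ≤ p := by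
  by_contra! h
  rcases le_total (bHi - bLo) (sHi - sLo) with hw | hw
  · exact hS ⟨hw, by linarith⟩
  · exact hB ⟨hw, by linarith⟩

theorem strong_overlap_potential_decrease_general
    (d : ℕ)
    (S B : Set (EuclideanSpace ℝ (Fin d)))
    (hSne : S.Nonempty) (hScomp : IsCompact S) (hSconv : Convex ℝ S)
    (hBne : B.Nonempty) (hBcomp : IsCompact B) (hBconv : Convex ℝ B)
    (x : EuclideanSpace ℝ (Fin d)) (hx : ‖x‖ ≤ 1)
    (sLo sHi bLo bHi : ℝ)
    (hsLo : sLo = sInf ((fun v => ⟪v, x⟫) '' S)) (hsHi : sHi = sSup ((fun v => ⟪v, x⟫) '' S))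
    (hbLo : bLo = sInf ((fun v => ⟪v, x⟫) '' B)) (hbHi : bHi = sSup ((fun v => ⟪v, x⟫) '' B))
    (hOverlap : bLo < sHi)
    (hNotWeakS : ¬ (width B x ≤ width S x ∧ (sLo + sHi) / 2 ≤ bLo))
    (hNotWeakB : ¬ (width S x ≤ width B x ∧ sHi ≤ (bLo + bHi) / 2))
    (p : ℝ) :
    (∀ z : ℝ, 0 ≤ z → z ≤ width S x / 4 →
        volume (mink {v ∈ S | ⟪v, x⟫ ≤ p} z)
          ≤ ENNReal.ofReal (1 - (6:ℝ) ^ (-(d:ℤ))) * volume (mink S z)) ∨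
    (∀ z : ℝ, 0 ≤ z → z ≤ width B x / 4 →
        volume (mink {v ∈ B | p ≤ ⟪v, x⟫} z)
          ≤ ENNReal.ofReal (1 - (6:ℝ) ^ (-(d:ℤ))) * volume (mink B z)) := by
  have hx0 : x ≠ 0 := by
    rintro rfl
    simp only [inner_zero_right, hSne.image_const, hBne.image_const, csSup_singleton,
      csInf_singleton] at hsHi hbLo
    exact hOverlap.ne (hbLo.trans hsHi.symm)
  have hf : Continuous fun v : EuclideanSpace ℝ (Fin d) => ⟪v, x⟫ :=
    continuous_id.inner continuous_const
  obtain ⟨vS, hvS, rfl⟩ : ∃ v ∈ S, ⟪v, x⟫ = sHi := by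
    rw [hsHi]; exact (hScomp.image hf).sSup_mem (hSne.image _)
  obtain ⟨vB, hvB, rfl⟩ : ∃ v ∈ B, ⟪v, x⟫ = bLo := by
    rw [hbLo]; exact (hBcomp.image hf).sInf_mem (hBne.image _)
  have hSlo : ∀ v ∈ S, sLo ≤ ⟪v, x⟫ := fun v hv =>
    hsLo ▸ csInf_le (hScomp.image hf).bddBelow (mem_image_of_mem _ hv)
  have hBhi : ∀ v ∈ B, ⟪v, x⟫ ≤ bHi := fun v hv =>
    hbHi ▸ le_csSup (hBcomp.image hf).bddAbove (mem_image_of_mem _ hv)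
  have hwS : width S x = ⟪vS, x⟫ - sLo := by rw [width, ← hsLo, ← hsHi]
  have hwB : width B x = bHi - ⟪vB, x⟫ := by rw [width, ← hbLo, ← hbHi]
  rw [hwS, hwB] at hNotWeakS hNotWeakB ⊢
  rcases le_three_quarters_or_three_quarters_le hNotWeakS hNotWeakB p with hp | hp
  · refine .inl fun z hz0 hz => ?_
    simpa only [mink, finrank_euclideanSpace_fin] using
      addHaar_sublevel_add_closedBall_le volume hScomp hSconv hx0 hx hvS hSlo hp hz0 hz
  · refine .inr fun z hz0 hz => ?_
    simpa only [mink, finrank_euclideanSpace_fin] using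
      addHaar_superlevel_add_closedBall_le volume hBcomp hBconv hx0 hx hvB hBhi hp hz0 hz

/-- Strong overlap case: any accepted price shrinks at least one of the two Steiner
potentials by a factor `1 - 6^{-d}`. -/
theorem strong_overlap_potential_decrease
    (d : ℕ) (hd : 1 ≤ d)
    (S B : Set (EuclideanSpace ℝ (Fin d)))
    (hSne : S.Nonempty) (hScomp : IsCompact S) (hSconv : Convex ℝ S)
    (hBne : B.Nonempty) (hBcomp : IsCompact B) (hBconv : Convex ℝ B)
    (x : EuclideanSpace ℝ (Fin d)) (hx : ‖x‖ ≤ 1)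
    (sLo sHi bLo bHi : ℝ)
    (hsLo : sLo = sInf ((fun v => ⟪v, x⟫) '' S)) (hsHi : sHi = sSup ((fun v => ⟪v, x⟫) '' S))
    (hbLo : bLo = sInf ((fun v => ⟪v, x⟫) '' B)) (hbHi : bHi = sSup ((fun v => ⟪v, x⟫) '' B))
    (hOverlap : bLo < sHi)
    (hNotWeakS : ¬ (width B x ≤ width S x ∧ (sLo + sHi) / 2 ≤ bLo))
    (hNotWeakB : ¬ (width S x ≤ width B x ∧ sHi ≤ (bLo + bHi) / 2))
    (p : ℝ) (hpl : sLo ≤ p) (hpu : p ≤ bHi) :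
    (∀ z : ℝ, 0 ≤ z → z ≤ width S x / 4 →
        volume (mink {v ∈ S | ⟪v, x⟫ ≤ p} z)
          ≤ ENNReal.ofReal (1 - (6:ℝ) ^ (-(d:ℤ))) * volume (mink S z)) ∨
    (∀ z : ℝ, 0 ≤ z → z ≤ width B x / 4 →
        volume (mink {v ∈ B | p ≤ ⟪v, x⟫} z)
          ≤ ENNReal.ofReal (1 - (6:ℝ) ^ (-(d:ℤ))) * volume (mink B z)) :=
  strong_overlap_potential_decrease_general d S B hSne hScomp hSconv hBne hBcomp hBconv x hx sLo sHi
    bLo bHi hsLo hsHi hbLo hbHi hOverlap hNotWeakS hNotWeakB p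

end
end

section
/- Let d ≥ 1 be an integer, let S ⊆ ℝ^d be a nonempty compact convex set, let x ∈ ℝ^d with ‖x‖ ≤ 1, let i ∈ ℕ, and set z = 2^{-3·2^i}/(16d). Let m ∈ ℝ satisfy vol({v ∈ S + z𝔹 : ⟪v,x⟫ ≥ m}) = 2^{-2^{i-1}} · vol(S + z𝔹) (with 2^{-2^{i-1}} a real power, e.g. 2^{-1/2} when i = 0). Then the set obtained after the seller refuses the price m + z satisfies vol({v ∈ S : ⟪v,x⟫ ≥ m + z} + z𝔹) ≤ 2^{-2^{i-1}} · vol(S + z𝔹). -/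
open MeasureTheory Set
open scoped RealInnerProductSpace Pointwise ENNReal

noncomputable section

section

variable {E : Type*} [NormedAddCommGroup E] [InnerProductSpace ℝ E]

theorem neg_le_inner_of_mem_closedBall {x w : E} {r : ℝ} (hx : ‖x‖ ≤ 1)
    (hw : w ∈ Metric.closedBall (0 : E) r) : -r ≤ ⟪w, x⟫ := by
  rw [mem_closedBall_zero_iff] at hw
  have hwx : ‖w‖ * ‖x‖ ≤ r := by nlinarith [norm_nonneg w, norm_nonneg x]
  linarith [neg_le_of_abs_le (abs_real_inner_le_norm w x)]

theorem superlevel_add_closedBall_subset (K : Set E) {x : E} (hx : ‖x‖ ≤ 1) (m r : ℝ) :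
    {v ∈ K | m + r ≤ ⟪v, x⟫} + Metric.closedBall (0 : E) r
      ⊆ {v ∈ K + Metric.closedBall (0 : E) r | m ≤ ⟪v, x⟫} := by
  rintro _ ⟨s, ⟨hsK, hsm⟩, w, hw, rfl⟩
  refine ⟨add_mem_add hsK hw, ?_⟩
  rw [inner_add_left]
  linarith [neg_le_inner_of_mem_closedBall hx hw]

end

theorem refuse_unbalanced_price_potential_decrease_general
    (d : ℕ)
    (S : Set (EuclideanSpace ℝ (Fin d)))
    (x : EuclideanSpace ℝ (Fin d)) (hx : ‖x‖ ≤ 1)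
    (i : ℕ) (z : ℝ)
    (m : ℝ)
    (hm : volume {v ∈ mink S z | m ≤ ⟪v, x⟫}
        = ENNReal.ofReal ((2:ℝ) ^ (-((2:ℝ) ^ ((i:ℝ) - 1)))) * volume (mink S z)) :
    volume (mink {v ∈ S | m + z ≤ ⟪v, x⟫} z)
      ≤ ENNReal.ofReal ((2:ℝ) ^ (-((2:ℝ) ^ ((i:ℝ) - 1)))) * volume (mink S z) :=
  hm ▸ measure_mono (superlevel_add_closedBall_subset S hx m z)

/-- Refusing an unbalanced price shrinks the Steiner potential by a factor
`2^{-2^{i-1}}`. -/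
theorem refuse_unbalanced_price_potential_decrease
    (d : ℕ) (hd : 1 ≤ d)
    (S : Set (EuclideanSpace ℝ (Fin d))) (hSne : S.Nonempty) (hScomp : IsCompact S)
    (hSconv : Convex ℝ S)
    (x : EuclideanSpace ℝ (Fin d)) (hx : ‖x‖ ≤ 1)
    (i : ℕ) (z : ℝ) (hzdef : z = (2:ℝ) ^ (-(3 * 2 ^ i : ℤ)) / (16 * d))
    (m : ℝ)
    (hm : volume {v ∈ mink S z | m ≤ ⟪v, x⟫}
        = ENNReal.ofReal ((2:ℝ) ^ (-((2:ℝ) ^ ((i:ℝ) - 1)))) * volume (mink S z)) :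
    volume (mink {v ∈ S | m + z ≤ ⟪v, x⟫} z)
      ≤ ENNReal.ofReal ((2:ℝ) ^ (-((2:ℝ) ^ ((i:ℝ) - 1)))) * volume (mink S z) :=
  refuse_unbalanced_price_potential_decrease_general d S x hx i z m hm

end
end
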